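/- Let d ≥ 3 and let m, n be integers with 1 < m < n < d satisfying n − m − 1 ≤ m − 1 ≤ d − n. Then there exists an integral convex polytope P ⊂ ℝ^d of dimension d whose δ-vector (δ_0, …, δ_d) satisfies δ_0 = δ_m = δ_n = 1 and δ_j = 0 for all j ∉ {0, m, n}. -/

import Mathlib

open Finset MeasureTheory

/-- A point of `ℝ^N` has integer coordinates. -/
def IsLatticePt {N : ℕ} (x : Fin N → ℝ) : Prop := ∀ j, ∃ z : ℤ, x j = (z : ℝ)

/-- `P ⊂ ℝ^N` is an integral convex polytope of dimension `d`: the convex hull of a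
nonempty finite set of lattice points, whose affine hull has dimension `d`. -/
def IsIntegralPolytope (N d : ℕ) (P : Set (Fin N → ℝ)) : Prop :=
  (∃ V : Finset (Fin N → ℝ), V.Nonempty ∧ (∀ v ∈ V, IsLatticePt v) ∧
    P = convexHull ℝ (V : Set (Fin N → ℝ))) ∧
  Module.finrank ℝ (vectorSpan ℝ P) = d

/-- `i(P, n) = |nP ∩ ℤ^N|`, the number of lattice points in the `n`-th dilate of `P`. -/
noncomputable def ehrhart {N : ℕ} (P : Set (Fin N → ℝ)) (n : ℕ) : ℕ :=
  Set.ncard {x : Fin N → ℝ | x ∈ (fun p => (n : ℝ) • p) '' P ∧ IsLatticePt x}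

/-- The `i`-th entry of the δ-vector of a `d`-dimensional polytope `P`, via the
formula `δ_i = Σ_{j=0}^i (−1)^j C(d+1, j) i(P, i−j)`, which is equivalent to the
generating-function definition `(1−λ)^{d+1}(1 + Σ_{n≥1} i(P,n) λ^n) = Σ_i δ_i λ^i`. -/
noncomputable def deltaVector {N : ℕ} (d : ℕ) (P : Set (Fin N → ℝ)) (i : ℕ) : ℤ :=
  ∑ j ∈ Finset.range (i + 1),
    (-1 : ℤ) ^ j * (Nat.choose (d + 1) j : ℤ) * (ehrhart P (i - j) : ℤ)

/-!
The polytope is the simplex `P` with vertices `0, e_1, …, e_{d-1}` and `(a, c)`, `a ∈ ℤ^{d-1}`.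
Writing a lattice point of `kP` in barycentric coordinates and splitting them into integer and
fractional parts, the fractional part is one of the `c` lattice points `b_0, …, b_{c-1}` of the
half-open parallelepiped spanned by the nonzero vertices, and the integer part is an arbitrary
`g ∈ ℕ^d` with `|g| + h_r ≤ k`, where `h_r` is the ceiling of the sum of the barycentric
coordinates of `b_r`. Hence `i(P, k) = ∑_r C(k - h_r + d, d)`, i.e. the Ehrhart series is
`∑_r λ^{h_r} / (1 - λ)^{d+1}`, and `δ_i = #{r | h_r = i}`. For `c = 3` and `a = (2, …, 2, 1, …, 1, 0, …, 0)` with `q` twos and `p`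
ones, `h_1 = ⌈(2p + q + 1)/3⌉` and `h_2 = ⌈(p + 2q + 2)/3⌉`; the choice `p = 2m - n`,
`q = 2n - m - 2` makes these `m` and `n`.
-/

section EhrhartSeries

open PowerSeries

theorem PowerSeries.coeff_one_sub_X_pow {R : Type*} [CommRing R] (n j : ℕ) :
    coeff j ((1 - X : R⟦X⟧) ^ n) = (-1) ^ j * n.choose j := by
  have hrescale : (1 - X : R⟦X⟧) = rescale (-1) (1 + X) := by simp [sub_eq_add_neg]
  have hpoly : (1 + X : R⟦X⟧) ^ n = (((1 + Polynomial.X) ^ n : Polynomial R) : R⟦X⟧) := by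
    push_cast
    rfl
  rw [hrescale, ← map_pow, coeff_rescale, hpoly, Polynomial.coeff_coe,
    Polynomial.coeff_one_add_X_pow]

theorem deltaVector_eq_coeff {N : ℕ} (d : ℕ) (P : Set (Fin N → ℝ)) (i : ℕ) :
    deltaVector d P i =
      coeff i ((1 - X : ℤ⟦X⟧) ^ (d + 1) * PowerSeries.mk fun k => (ehrhart P k : ℤ)) := by
  rw [coeff_mul, Finset.Nat.sum_antidiagonal_eq_sum_range_succ_mk, deltaVector]
  simp [coeff_one_sub_X_pow]

theorem deltaVector_eq_card_filter {N d : ℕ} {P : Set (Fin N → ℝ)} {ι : Type*} (s : Finset ι)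
    (h : ι → ℕ) (hP : ∀ k, ehrhart P k = ∑ r ∈ s, if h r ≤ k then (k - h r + d).choose d else 0)
    (i : ℕ) : deltaVector d P i = #{r ∈ s | h r = i} := by
  have hseries : (PowerSeries.mk fun k => (ehrhart P k : ℤ)) =
      ∑ r ∈ s, X ^ h r * PowerSeries.mk fun k => ((d + k).choose d : ℤ) := by
    ext k
    simp [hP, coeff_X_pow_mul', add_comm d]
  rw [deltaVector_eq_coeff, hseries, Finset.mul_sum]
  simp_rw [mul_left_comm _ (X ^ _), mul_comm ((1 - X : ℤ⟦X⟧) ^ (d + 1)),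
    mk_add_choose_mul_one_sub_pow_eq_one, mul_one, map_sum, coeff_X_pow]
  simp [Finset.sum_boole, eq_comm]

end EhrhartSeries

theorem Finset.card_piAntidiag_univ {ι : Type*} [Fintype ι] [DecidableEq ι] (n : ℕ) :
    #(piAntidiag (univ : Finset ι) n) = (Fintype.card ι + n - 1).choose n := by
  rw [← map_sym_eq_piAntidiag, card_map, sym_univ, card_univ, Sym.card_sym_eq_choose]

def tuplesSumLE (t K : ℕ) : Finset (Fin t → ℕ) :=
  {g ∈ Fintype.piFinset fun _ => range (K + 1) | ∑ i, g i ≤ K}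

theorem mem_tuplesSumLE {t K : ℕ} {g : Fin t → ℕ} : g ∈ tuplesSumLE t K ↔ ∑ i, g i ≤ K := by
  simp only [tuplesSumLE, mem_filter, Fintype.mem_piFinset, mem_range, and_iff_right_iff_imp]
  exact fun h i =>
    Nat.lt_succ_of_le ((single_le_sum (fun j _ => Nat.zero_le (g j)) (mem_univ i)).trans h)

theorem card_tuplesSumLE (t K : ℕ) : #(tuplesSumLE t K) = (K + t).choose t := by
  have hslack : #(tuplesSumLE t K) = #(piAntidiag (univ : Finset (Fin (t + 1))) K) := by
    refine card_nbij' (fun g => Fin.cons (K - ∑ i, g i) g) Fin.tail ?_ ?_ ?_ ?_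
    · intro g hg
      simp only [mem_coe, mem_tuplesSumLE] at hg
      simp only [mem_coe, mem_piAntidiag, Fin.sum_univ_succ, Fin.cons_zero, Fin.cons_succ]
      refine ⟨by omega, fun _ _ => mem_univ _⟩
    · intro g hg
      simp only [mem_coe, mem_piAntidiag, Fin.sum_univ_succ] at hg
      simp only [mem_coe, mem_tuplesSumLE, Fin.tail]
      omega
    · intro g _
      simp
    · intro g hg
      simp only [mem_coe, mem_piAntidiag, Fin.sum_univ_succ] at hg
      ext i
      refine Fin.cases ?_ (fun _ => rfl) i
      simp only [Fin.cons_zero, Fin.tail]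
      omega
  rw [hslack, card_piAntidiag_univ, Fintype.card_fin, add_right_comm, Nat.add_sub_cancel,
    add_comm t K, Nat.choose_symm_add]

section ConvexHull

variable {ι E : Type*} [Fintype ι] [AddCommGroup E] [Module ℝ E]

theorem convexHull_insert_zero_range (v : ι → E) :
    convexHull ℝ (insert 0 (Set.range v)) =
      Fintype.linearCombination ℝ v '' {μ | 0 ≤ μ ∧ ∑ i, μ i ≤ 1} := by
  classical
  apply Set.Subset.antisymm
  · refine convexHull_min ?_ ?_
    · rintro _ (rfl | ⟨i, rfl⟩)
      · exact ⟨0, by simp, map_zero _⟩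
      · exact ⟨Pi.single i 1, by simp [Pi.single_nonneg],
          by simp [Fintype.linearCombination_apply_single]⟩
    · refine Convex.linear_image ?_ _
      exact (convex_Ici 0).inter (convex_halfSpace_le (f := fun μ : ι → ℝ => ∑ i, μ i)
        ⟨fun _ _ => by simp [sum_add_distrib], fun _ _ => by simp [mul_sum]⟩ 1)
  · rintro _ ⟨μ, ⟨hμ0, hμ1⟩, rfl⟩
    have hw : ∀ o ∈ (univ : Finset (Option ι)), 0 ≤ o.elim (1 - ∑ i, μ i) μ := by
      rintro (_ | i) _
      · simpa using hμ1
      · exact hμ0 i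
    have hmem := (convex_convexHull ℝ (insert 0 (Set.range v))).sum_mem hw
      (by simp [Fintype.sum_option]) (z := fun o => o.elim 0 v) (by
        rintro (_ | i) _
        · exact subset_convexHull ℝ _ (Set.mem_insert _ _)
        · exact subset_convexHull ℝ _ (Set.mem_insert_of_mem _ (Set.mem_range_self i)))
    simpa [Fintype.sum_option, Fintype.linearCombination_apply] using hmem

theorem mem_smul_image_convexHull_insert_zero (v : ι → E) {k : ℝ} (hk : 0 ≤ k) {x : E} :
    x ∈ (k • ·) '' convexHull ℝ (insert 0 (Set.range v)) ↔
      ∃ μ : ι → ℝ, 0 ≤ μ ∧ ∑ i, μ i ≤ k ∧ Fintype.linearCombination ℝ v μ = x := by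
  rw [convexHull_insert_zero_range, Set.image_image]
  constructor
  · rintro ⟨μ, ⟨hμ0, hμ1⟩, rfl⟩
    refine ⟨k • μ, smul_nonneg hk hμ0, ?_, map_smul _ _ _⟩
    simpa [← mul_sum] using mul_le_of_le_one_right hk hμ1
  · rintro ⟨μ, hμ0, hμk, rfl⟩
    rcases hk.eq_or_lt with rfl | hk
    · have hμ : μ = 0 := funext fun i => (sum_eq_zero_iff_of_nonneg fun i _ => hμ0 i).1
        (hμk.antisymm (sum_nonneg fun i _ => hμ0 i)) i (mem_univ i)
      exact ⟨0, by simp, by simp [hμ]⟩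
    · refine ⟨k⁻¹ • μ, ⟨smul_nonneg (inv_nonneg.2 hk.le) hμ0, ?_⟩, ?_⟩
      · simpa [← mul_sum, inv_mul_le_iff₀ hk] using hμk
      · simp [smul_smul, hk.ne']

end ConvexHull

section ApexSimplex

variable {D : ℕ} (a : Fin D → ℤ) (c : ℕ)

def apexVertex : Fin (D + 1) → Fin (D + 1) → ℝ :=
  Fin.snoc (fun i => Pi.single i.castSucc 1) (Fin.snoc (fun i => (a i : ℝ)) c)

def apexSimplex : Set (Fin (D + 1) → ℝ) := convexHull ℝ (insert 0 (Set.range (apexVertex a c)))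

noncomputable def apexCoord (x : Fin (D + 1) → ℝ) : Fin (D + 1) → ℝ :=
  Fin.snoc (fun i => x i.castSucc - a i * x (Fin.last D) / c) (x (Fin.last D) / c)

/-- Barycentric coordinates of the `r`-th lattice point of the half-open parallelepiped spanned
by `apexVertex a c`. -/
noncomputable def boxCoord (r : ℕ) : Fin (D + 1) → ℝ :=
  Fin.snoc (fun i => ⌈(a i * r : ℝ) / c⌉ - a i * r / c) (r / c)

noncomputable def boxHeight (r : ℕ) : ℕ := ⌈∑ j, boxCoord a c r j⌉₊

noncomputable def latticeLift (r : ℕ) (g : Fin (D + 1) → ℕ) : Fin (D + 1) → ℤ :=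
  Fin.snoc (fun i => g i.castSucc + a i * g (Fin.last D) + ⌈(a i * r : ℝ) / c⌉)
    (c * g (Fin.last D) + r)

theorem linearCombination_apexVertex (μ : Fin (D + 1) → ℝ) :
    Fintype.linearCombination ℝ (apexVertex a c) μ =
      Fin.snoc (fun i => μ i.castSucc + a i * μ (Fin.last D)) (c * μ (Fin.last D)) := by
  ext j
  simp only [Fintype.linearCombination_apply, Finset.sum_apply, Fin.sum_univ_castSucc, apexVertex,
    Fin.snoc_castSucc, Fin.snoc_last, Pi.smul_apply, smul_eq_mul]
  induction j using Fin.lastCases with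
  | last => simp [Fin.castSucc_ne_last, mul_comm]
  | cast j => simp [Pi.single_apply, Fin.castSucc_inj, mul_comm]

variable {a c}

theorem linearCombination_apexCoord (hc : c ≠ 0) (x : Fin (D + 1) → ℝ) :
    Fintype.linearCombination ℝ (apexVertex a c) (apexCoord a c x) = x := by
  ext j
  induction j using Fin.lastCases with
  | last => simp [linearCombination_apexVertex, apexCoord, mul_div_cancel₀, hc]
  | cast j =>
    simp only [apexCoord, linearCombination_apexVertex, Fin.snoc_castSucc, Fin.snoc_last]
    ring

theorem apexCoord_linearCombination (hc : c ≠ 0) (μ : Fin (D + 1) → ℝ) :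
    apexCoord a c (Fintype.linearCombination ℝ (apexVertex a c) μ) = μ := by
  ext j
  induction j using Fin.lastCases with
  | last => simp [linearCombination_apexVertex, apexCoord, hc]
  | cast j =>
    simp [linearCombination_apexVertex, apexCoord, mul_div_cancel_left₀, hc, mul_div_assoc]

theorem mem_smul_apexSimplex (hc : c ≠ 0) {k : ℝ} (hk : 0 ≤ k) {x : Fin (D + 1) → ℝ} :
    x ∈ (k • ·) '' apexSimplex a c ↔ 0 ≤ apexCoord a c x ∧ ∑ i, apexCoord a c x i ≤ k := by
  rw [apexSimplex, mem_smul_image_convexHull_insert_zero _ hk]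
  constructor
  · rintro ⟨μ, hμ0, hμk, rfl⟩
    rw [apexCoord_linearCombination hc]
    exact ⟨hμ0, hμk⟩
  · rintro ⟨hx0, hxk⟩
    exact ⟨_, hx0, hxk, linearCombination_apexCoord hc x⟩

variable (a) in
theorem isIntegralPolytope_apexSimplex (hc : c ≠ 0) :
    IsIntegralPolytope (D + 1) (D + 1) (apexSimplex a c) := by
  classical
  refine ⟨⟨insert 0 (univ.image (apexVertex a c)), insert_nonempty _ _, ?_,
    by simp [apexSimplex]⟩, ?_⟩
  · simp only [mem_insert, mem_image, mem_univ, true_and]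
    rintro _ (rfl | ⟨i, rfl⟩) j
    · exact ⟨0, by simp⟩
    · induction i using Fin.lastCases with
      | last =>
        induction j using Fin.lastCases with
        | last => exact ⟨c, by simp [apexVertex]⟩
        | cast j => exact ⟨a j, by simp [apexVertex]⟩
      | cast i =>
        by_cases hij : j = i.castSucc
        · exact ⟨1, by simp [apexVertex, hij]⟩
        · exact ⟨0, by simp [apexVertex, hij]⟩
  · have hsurj : Function.Surjective (Fintype.linearCombination ℝ (apexVertex a c)) :=
      fun x => ⟨_, linearCombination_apexCoord hc x⟩
    have hspan : Submodule.span ℝ (Set.range (apexVertex a c)) ≤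
        vectorSpan ℝ (insert 0 (Set.range (apexVertex a c))) := by
      refine Submodule.span_le.2 ?_
      rintro _ ⟨i, rfl⟩
      simpa using vsub_mem_vectorSpan ℝ (Set.mem_insert_of_mem _ (Set.mem_range_self i))
        (Set.mem_insert (0 : Fin (D + 1) → ℝ) (Set.range (apexVertex a c)))
    rw [← Fintype.range_linearCombination, LinearMap.range_eq_top.2 hsurj, top_le_iff] at hspan
    rw [apexSimplex, ← direction_affineSpan, affineSpan_convexHull, direction_affineSpan, hspan,
      finrank_top, Module.finrank_fin_fun]

theorem boxCoord_nonneg (r : ℕ) : 0 ≤ boxCoord a c r := by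
  intro j
  induction j using Fin.lastCases with
  | last => simp only [boxCoord, Fin.snoc_last]; positivity
  | cast i => simpa [boxCoord] using Int.le_ceil _

theorem apexCoord_latticeLift (hc : c ≠ 0) (r : ℕ) (g : Fin (D + 1) → ℕ) :
    apexCoord a c (fun j => (latticeLift a c r g j : ℝ)) = fun j => g j + boxCoord a c r j := by
  ext j
  induction j using Fin.lastCases with
  | last => simp [apexCoord, latticeLift, boxCoord, hc, add_div, mul_div_cancel_left₀]
  | cast i =>
    simp only [apexCoord, latticeLift, boxCoord, Fin.snoc_castSucc, Fin.snoc_last, Int.cast_add,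
      Int.cast_natCast, Int.cast_mul]
    field_simp
    ring

theorem latticeLift_mem_smul_apexSimplex_iff (hc : c ≠ 0) (r : ℕ) (g : Fin (D + 1) → ℕ)
    (k : ℕ) : (fun j => (latticeLift a c r g j : ℝ)) ∈ ((k : ℝ) • ·) '' apexSimplex a c ↔
      ∑ j, g j + boxHeight a c r ≤ k := by
  have hbox := boxCoord_nonneg (a := a) (c := c) r
  rw [mem_smul_apexSimplex hc k.cast_nonneg, apexCoord_latticeLift hc, boxHeight,
    add_comm (∑ j, g j), ← Nat.ceil_add_natCast (sum_nonneg fun j _ => hbox j), Nat.ceil_le]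
  simp only [sum_add_distrib, Nat.cast_sum, add_comm (∑ j, (g j : ℝ))]
  exact and_iff_right fun j => add_nonneg (Nat.cast_nonneg _) (hbox j)

theorem exists_latticeLift_eq (hc : 0 < c) {z : Fin (D + 1) → ℤ}
    (hz : 0 ≤ apexCoord a c fun j => (z j : ℝ)) : ∃ r < c, ∃ g, latticeLift a c r g = z := by
  have hcR : (0 : ℝ) < c := Nat.cast_pos.2 hc
  have hlast : 0 ≤ z (Fin.last D) := by
    have := hz (Fin.last D)
    simp only [apexCoord, Fin.snoc_last, Pi.zero_apply] at this
    exact_mod_cast (div_nonneg_iff.1 this).resolve_right (fun h => hcR.not_ge h.2) |>.1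
  set u := z (Fin.last D) / c
  set r := z (Fin.last D) % c
  have hu : 0 ≤ u := Int.ediv_nonneg hlast (Int.natCast_nonneg c)
  have hr : 0 ≤ r := Int.emod_nonneg _ (Int.natCast_ne_zero.2 hc.ne')
  have hrc : r < c := Int.emod_lt_of_pos _ (Int.natCast_pos.2 hc)
  have hzu : z (Fin.last D) = c * u + r := (Int.mul_ediv_add_emod _ _).symm
  have hg : ∀ i : Fin D, ⌈(a i * r.toNat : ℝ) / c⌉ ≤ z i.castSucc - a i * u := by
    intro i
    have := hz i.castSucc
    simp only [apexCoord, Fin.snoc_castSucc, Pi.zero_apply, sub_nonneg, hzu] at this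
    have hrR : ((r.toNat : ℕ) : ℝ) = r := by exact_mod_cast Int.toNat_of_nonneg hr
    rw [Int.ceil_le, hrR]
    push_cast at this ⊢
    rw [div_le_iff₀ hcR] at this ⊢
    nlinarith
  refine ⟨r.toNat, by omega,
    Fin.snoc (fun i => (z i.castSucc - a i * u - ⌈(a i * r.toNat : ℝ) / c⌉).toNat) u.toNat, ?_⟩
  ext j
  induction j using Fin.lastCases with
  | last => simp [latticeLift, hzu, Int.toNat_of_nonneg hu, Int.toNat_of_nonneg hr]
  | cast i =>
    simp only [latticeLift, Fin.snoc_castSucc, Fin.snoc_last, Int.toNat_of_nonneg hu,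
      Int.toNat_of_nonneg (sub_nonneg.2 (hg i))]
    ring

theorem latticeLift_injective {r r' : ℕ} (hr : r < c) (hr' : r' < c) {g g' : Fin (D + 1) → ℕ}
    (h : latticeLift a c r g = latticeLift a c r' g') : r = r' ∧ g = g' := by
  have hlast := congrFun h (Fin.last D)
  simp only [latticeLift, Fin.snoc_last] at hlast
  norm_cast at hlast
  obtain ⟨hq, rfl⟩ : g (Fin.last D) = g' (Fin.last D) ∧ r = r' := by
    have h1 := congrArg (· / c) hlast
    have h2 := congrArg (· % c) hlast
    simp only [Nat.mul_add_div (by omega : 0 < c), Nat.div_eq_of_lt hr, Nat.div_eq_of_lt hr',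
      Nat.mul_add_mod, Nat.mod_eq_of_lt hr, Nat.mod_eq_of_lt hr', add_zero] at h1 h2
    exact ⟨h1, h2⟩
  refine ⟨rfl, funext fun j => ?_⟩
  induction j using Fin.lastCases with
  | last => exact hq
  | cast i =>
    have := congrFun h i.castSucc
    simp only [latticeLift, Fin.snoc_castSucc, hq] at this
    omega

theorem ehrhart_apexSimplex (hc : 0 < c) (k : ℕ) :
    ehrhart (apexSimplex a c) k = ∑ r ∈ range c,
      if boxHeight a c r ≤ k then (k - boxHeight a c r + (D + 1)).choose (D + 1) else 0 := by
  set F : Finset (Σ _ : ℕ, Fin (D + 1) → ℕ) :=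
    {r ∈ range c | boxHeight a c r ≤ k}.sigma fun r => tuplesSumLE (D + 1) (k - boxHeight a c r)
  have hF : ∀ p, p ∈ F ↔ p.1 < c ∧ ∑ j, p.2 j + boxHeight a c p.1 ≤ k := by
    rintro ⟨r, g⟩
    simp only [F, mem_sigma, mem_filter, mem_range, mem_tuplesSumLE]
    omega
  have hlattice : {x | x ∈ ((k : ℝ) • ·) '' apexSimplex a c ∧ IsLatticePt x} =
      (fun p : Σ _ : ℕ, Fin (D + 1) → ℕ => fun j => (latticeLift a c p.1 p.2 j : ℝ)) '' F := by
    ext x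
    simp only [Set.mem_ofPred_eq, Set.mem_image, mem_coe, hF]
    constructor
    · rintro ⟨hx, hlat⟩
      choose z hz using hlat
      obtain rfl : x = fun j => (z j : ℝ) := funext hz
      obtain ⟨r, hr, g, rfl⟩ :=
        exists_latticeLift_eq hc ((mem_smul_apexSimplex hc.ne' k.cast_nonneg).1 hx).1
      exact ⟨⟨r, g⟩, ⟨hr, (latticeLift_mem_smul_apexSimplex_iff hc.ne' r g k).1 hx⟩, rfl⟩
    · rintro ⟨⟨r, g⟩, ⟨-, hk⟩, rfl⟩
      exact ⟨(latticeLift_mem_smul_apexSimplex_iff hc.ne' r g k).2 hk, fun j => ⟨_, rfl⟩⟩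
  have hinj : Set.InjOn
      (fun p : Σ _ : ℕ, Fin (D + 1) → ℕ => fun j => (latticeLift a c p.1 p.2 j : ℝ)) F := by
    rintro ⟨r, g⟩ hp ⟨r', g'⟩ hp' h
    have hz : latticeLift a c r g = latticeLift a c r' g' :=
      funext fun j => Int.cast_injective (α := ℝ) (congrFun h j)
    obtain ⟨rfl, rfl⟩ := latticeLift_injective ((hF _).1 hp).1 ((hF _).1 hp').1 hz
    rfl
  rw [ehrhart, hlattice, hinj.ncard_image, Set.ncard_coe_finset, card_sigma, sum_filter]
  simp only [card_tuplesSumLE]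

variable (a) in
theorem deltaVector_apexSimplex (hc : 0 < c) (i : ℕ) :
    deltaVector (D + 1) (apexSimplex a c) i = #{r ∈ range c | boxHeight a c r = i} :=
  deltaVector_eq_card_filter _ _ (ehrhart_apexSimplex hc) i

theorem sum_boxCoord (r : ℕ) :
    ∑ j, boxCoord a c r j = r / c + ∑ i, ((⌈(a i * r : ℝ) / c⌉ : ℝ) - a i * r / c) := by
  simp only [Fin.sum_univ_castSucc, boxCoord, Fin.snoc_castSucc, Fin.snoc_last, add_comm]

theorem boxHeight_zero : boxHeight a c 0 = 0 := by
  simp [boxHeight, sum_boxCoord]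

end ApexSimplex

section Staircase

variable {D p q : ℕ}

def staircase (p q : ℕ) (i : Fin D) : ℤ :=
  if (i : ℕ) < q then 2 else if (i : ℕ) < p + q then 1 else 0

theorem sum_staircase (hpq : p + q ≤ D) (F : ℤ → ℝ) (hF : F 0 = 0) :
    ∑ i : Fin D, F (staircase p q i) = q * F 2 + p * F 1 := by
  set G : ℕ → ℝ := fun i => F (if i < q then 2 else if i < p + q then 1 else 0)
  have hq : ∀ i ∈ range q, G i = F 2 := fun i hi => by simp_all [G]
  have hp : ∀ i ∈ Ico q (p + q), G i = F 1 := fun i hi => by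
    simp only [mem_Ico] at hi
    simp [G, hi.2, hi.1.not_gt]
  have hD : ∀ i ∈ Ico (p + q) D, G i = 0 := fun i hi => by
    simp only [mem_Ico] at hi
    simp [G, hF, hi.1.not_gt, (le_of_add_le_right hi.1).not_gt]
  rw [show ∑ i : Fin D, F (staircase p q i) = ∑ i : Fin D, G i from rfl,
    Fin.sum_univ_eq_sum_range G, ← sum_range_add_sum_Ico _ hpq,
    ← sum_range_add_sum_Ico _ (Nat.le_add_left q p), sum_congr rfl hq, sum_congr rfl hp,
    sum_congr rfl hD]
  simp

theorem Nat.ceil_natCast_div_three (k : ℕ) : ⌈(k : ℝ) / 3⌉₊ = (k + 2) / 3 := by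
  apply le_antisymm
  · rw [Nat.ceil_le, div_le_iff₀ three_pos]
    exact_mod_cast (by omega : k ≤ (k + 2) / 3 * 3)
  · rcases Nat.eq_zero_or_pos ((k + 2) / 3) with h | h
    · simp [h]
    have : (((k + 2) / 3 - 1 : ℕ) : ℝ) < k / 3 := by
      rw [lt_div_iff₀ three_pos]
      exact_mod_cast (by omega : ((k + 2) / 3 - 1) * 3 < k)
    have := Nat.lt_ceil.2 this
    omega

theorem boxHeight_staircase_one (hpq : p + q ≤ D) :
    boxHeight (staircase (D := D) p q) 3 1 = (2 * p + q + 3) / 3 := by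
  rw [boxHeight, sum_boxCoord, sum_staircase hpq
      (fun x => ⌈(x * (1 : ℕ) : ℝ) / (3 : ℕ)⌉ - x * (1 : ℕ) / (3 : ℕ)) (by simp),
    show (2 * p + q + 3) / 3 = (2 * p + q + 1 + 2) / 3 by omega, ← Nat.ceil_natCast_div_three]
  congr 1
  norm_num [Int.ceil_eq_iff]
  ring

theorem boxHeight_staircase_two (hpq : p + q ≤ D) :
    boxHeight (staircase (D := D) p q) 3 2 = (p + 2 * q + 4) / 3 := by
  rw [boxHeight, sum_boxCoord, sum_staircase hpq
      (fun x => ⌈(x * (2 : ℕ) : ℝ) / (3 : ℕ)⌉ - x * (2 : ℕ) / (3 : ℕ)) (by simp),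
    show (p + 2 * q + 4) / 3 = (p + 2 * q + 2 + 2) / 3 by omega, ← Nat.ceil_natCast_div_three]
  congr 1
  norm_num [Int.ceil_eq_iff]
  ring

theorem deltaVector_apexSimplex_staircase (hpq : p + q ≤ D) (i : ℕ) :
    deltaVector (D + 1) (apexSimplex (staircase (D := D) p q) 3) i =
      (if 0 = i then 1 else 0) + (if (2 * p + q + 3) / 3 = i then 1 else 0) +
        (if (p + 2 * q + 4) / 3 = i then 1 else 0) := by
  rw [deltaVector_apexSimplex _ (by norm_num), card_filter, sum_range_succ, sum_range_succ,
    sum_range_one, boxHeight_zero, boxHeight_staircase_one hpq, boxHeight_staircase_two hpq]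
  push_cast
  rfl

end Staircase

theorem exists_polytope_delta_sum_three_general
    (d m n : ℕ) (hm : 1 < m) (hmn : m < n) (hnd : n < d)
    (hqp : n - m - 1 ≤ m - 1) (hpr : m - 1 ≤ d - n) :
    ∃ P : Set (Fin d → ℝ), IsIntegralPolytope d d P ∧
      deltaVector d P 0 = 1 ∧ deltaVector d P m = 1 ∧ deltaVector d P n = 1 ∧
      ∀ j ≤ d, j ≠ 0 → j ≠ m → j ≠ n → deltaVector d P j = 0 := by
  obtain ⟨D, rfl⟩ : ∃ D, d = D + 1 := ⟨d - 1, by omega⟩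
  have hδ := deltaVector_apexSimplex_staircase (D := D) (p := 2 * m - n) (q := 2 * n - m - 2)
    (by omega)
  refine ⟨_, isIntegralPolytope_apexSimplex (staircase (2 * m - n) (2 * n - m - 2))
    (by norm_num : 3 ≠ 0), ?_, ?_, ?_, fun j _ hj0 hjm hjn => ?_⟩ <;>
    rw [hδ] <;> split_ifs <;> omega

/-- For `d ≥ 3` and integers `1 < m < n < d` with `n − m − 1 ≤ m − 1 ≤ d − n`,
there exists an integral convex polytope `P ⊂ ℝ^d` of dimension `d` with
`δ_0 = δ_m = δ_n = 1` and all other entries of its δ-vector `0`. -/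
theorem exists_polytope_delta_sum_three
    (d m n : ℕ) (hd : 3 ≤ d) (hm : 1 < m) (hmn : m < n) (hnd : n < d)
    (hqp : n - m - 1 ≤ m - 1) (hpr : m - 1 ≤ d - n) :
    ∃ P : Set (Fin d → ℝ), IsIntegralPolytope d d P ∧
      deltaVector d P 0 = 1 ∧ deltaVector d P m = 1 ∧ deltaVector d P n = 1 ∧
      ∀ j ≤ d, j ≠ 0 → j ≠ m → j ≠ n → deltaVector d P j = 0 :=
  exists_polytope_delta_sum_three_general d m n hm hmn hnd hqp hpr
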